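/- arXiv:2602.04599 — 3 statements merged into one kernel-verified Lean document; each statement's English description precedes it below -/
import Mathlib

section
/- Let (Ω, 𝒜, P) be a probability space, H a positive natural number, and c_0, …, c_{H−1} : Ω → ℝ measurable random variables each taking values in {0, 1}. Set C_H = ∑_{t=0}^{H−1} c_t. Then for every λ > 0, P({ω : ∃ t < H, c_t(ω) = 1}) ≤ (1 − E[exp(−λ · C_H)]) / (1 − exp(−λ)). -/
/-!
On `{∃ t < H, c t = 1}` the cumulative signal `C_H` is at least `1`, so `1 - exp (-λ C_H)` is at
least `1 - exp (-λ)` there, while it is nonnegative everywhere. Markov's inequality for the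
nonnegative variable `1 - exp (-λ C_H)` gives the bound.
-/

open MeasureTheory Real

lemma mul_measureReal_le_integral_of_le_on {Ω : Type*} [MeasurableSpace Ω] {μ : Measure Ω}
    [IsFiniteMeasure μ] {g : Ω → ℝ} {A : Set Ω} {δ : ℝ} (hg : Integrable g μ) (hg_nonneg : 0 ≤ g)
    (hδ : 0 ≤ δ) (hA : ∀ ω ∈ A, δ ≤ g ω) :
    δ * μ.real A ≤ ∫ ω, g ω ∂μ :=
  calc δ * μ.real A ≤ δ * μ.real {ω | δ ≤ g ω} :=
        mul_le_mul_of_nonneg_left (measureReal_mono hA) hδ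
    _ ≤ ∫ ω, g ω ∂μ := mul_meas_ge_le_integral_of_nonneg (.of_forall hg_nonneg) hg δ

lemma mul_measureReal_le_one_sub_integral {Ω : Type*} [MeasurableSpace Ω] {μ : Measure Ω}
    [IsProbabilityMeasure μ] {f : Ω → ℝ} {A : Set Ω} {δ : ℝ} (hf : Integrable f μ)
    (hf_le_one : ∀ ω, f ω ≤ 1) (hδ : 0 ≤ δ) (hA : ∀ ω ∈ A, f ω ≤ 1 - δ) :
    δ * μ.real A ≤ 1 - ∫ ω, f ω ∂μ := by
  have h := mul_measureReal_le_integral_of_le_on (g := fun ω ↦ 1 - f ω)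
    ((integrable_const 1).sub hf) (fun ω ↦ sub_nonneg.2 (hf_le_one ω)) hδ
    (fun ω hω ↦ by linarith [hA ω hω])
  rwa [integral_sub (integrable_const 1) hf, integral_const, probReal_univ, one_smul] at h

lemma exp_neg_mul_le_exp_neg {lam x : ℝ} (hlam : 0 ≤ lam) (hx : 1 ≤ x) :
    exp (-lam * x) ≤ exp (-lam) :=
  exp_le_exp.2 (by nlinarith)

lemma exp_neg_mul_le_one {lam x : ℝ} (hlam : 0 ≤ lam) (hx : 0 ≤ x) : exp (-lam * x) ≤ 1 :=
  exp_le_one_iff.2 (by nlinarith)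

theorem chance_bound_binary_general
    {Ω : Type*} [MeasurableSpace Ω] (P : Measure Ω) [IsProbabilityMeasure P]
    (H : ℕ) (c : ℕ → Ω → ℝ)
    (hmeas : ∀ t < H, Measurable (c t))
    (hbin : ∀ t < H, ∀ ω, c t ω = 0 ∨ c t ω = 1)
    (lam : ℝ) (hlam : 0 < lam) :
    (P {ω | ∃ t < H, c t ω = 1}).toReal ≤
      (1 - ∫ ω, Real.exp (-lam * ∑ t ∈ Finset.range H, c t ω) ∂P) /
        (1 - Real.exp (-lam)) := by
  have hc_nonneg : ∀ ω, ∀ t ∈ Finset.range H, 0 ≤ c t ω := fun ω t ht ↦ by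
    rcases hbin t (Finset.mem_range.1 ht) ω with h | h <;> simp [h]
  have hC_nonneg (ω : Ω) : 0 ≤ ∑ t ∈ Finset.range H, c t ω :=
    Finset.sum_nonneg (hc_nonneg ω)
  have hC_ge_one : ∀ ω ∈ {ω | ∃ t < H, c t ω = 1}, 1 ≤ ∑ t ∈ Finset.range H, c t ω := by
    rintro ω ⟨t, ht, hct⟩
    exact hct ▸ Finset.single_le_sum (hc_nonneg ω) (Finset.mem_range.2 ht)
  have hmeas_exp : Measurable fun ω ↦ exp (-lam * ∑ t ∈ Finset.range H, c t ω) :=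
    measurable_exp.comp <| measurable_const.mul <|
      Finset.measurable_sum _ fun t ht ↦ hmeas t (Finset.mem_range.1 ht)
  have hint : Integrable (fun ω ↦ exp (-lam * ∑ t ∈ Finset.range H, c t ω)) P :=
    .of_bound hmeas_exp.aestronglyMeasurable 1 <| .of_forall fun ω ↦ by
      rw [norm_of_nonneg (exp_pos _).le]
      exact exp_neg_mul_le_one hlam.le (hC_nonneg ω)
  have hgap : 0 < 1 - exp (-lam) := sub_pos.2 (exp_lt_one_iff.2 (neg_lt_zero.2 hlam))
  rw [le_div_iff₀ hgap, mul_comm]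
  exact mul_measureReal_le_one_sub_integral hint
    (fun ω ↦ exp_neg_mul_le_one hlam.le (hC_nonneg ω)) hgap.le
    (fun ω hω ↦ by linarith [exp_neg_mul_le_exp_neg hlam.le (hC_ge_one ω hω)])

/-- **Binary-violation chance bound.** If each per-step violation signal
`c t : Ω → ℝ` (for `t < H`) is measurable and `{0,1}`-valued, and
`C_H = ∑_{t<H} c t`, then for every `λ > 0`,
`P(∃ t < H, c t = 1) ≤ (1 − E[exp(−λ C_H)]) / (1 − exp(−λ))`. -/
theorem chance_bound_binary
    {Ω : Type*} [MeasurableSpace Ω] (P : Measure Ω) [IsProbabilityMeasure P]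
    (H : ℕ) (hH : 0 < H) (c : ℕ → Ω → ℝ)
    (hmeas : ∀ t < H, Measurable (c t))
    (hbin : ∀ t < H, ∀ ω, c t ω = 0 ∨ c t ω = 1)
    (lam : ℝ) (hlam : 0 < lam) :
    (P {ω | ∃ t < H, c t ω = 1}).toReal ≤
      (1 - ∫ ω, Real.exp (-lam * ∑ t ∈ Finset.range H, c t ω) ∂P) /
        (1 - Real.exp (-lam)) :=
  chance_bound_binary_general P H c hmeas hbin lam hlam
end

section
/- Let h : (0,1) → ℝ be the binary entropy h(p) = −p·log p − (1−p)·log(1−p), and for parameters γ = 9/10, κ = 1, r = 2/5 define f, g : (0,1) → ℝ by f(p) = (p·r + κ·h(p) − κ·log 2)/(1 − γ·p) and g(p) = (p·r + κ·h(p))/(1 − γ·p). Then there exist p₁, p₂ ∈ (0,1) such that p₁ is a maximizer of f on (0,1), p₂ is a maximizer of g on (0,1), and no point of (0,1) is simultaneously a maximizer of f on (0,1) and a maximizer of g on (0,1). -/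
/-- The binary entropy function `h(p) = −p log p − (1−p) log (1−p)`. -/
noncomputable def binEntropy (p : ℝ) : ℝ :=
  -p * Real.log p - (1 - p) * Real.log (1 - p)

/-- The exact CaI-AS objective of the one-state stop/continue MDP with
`(γ, κ, r) = (9/10, 1, 2/5)`, including the living-cost term `−κ log 2`. -/
noncomputable def fAS (p : ℝ) : ℝ :=
  (p * (2 / 5) + 1 * binEntropy p - 1 * Real.log 2) / (1 - (9 / 10) * p)

/-- The same objective with the living-cost term dropped. -/
noncomputable def gASN (p : ℝ) : ℝ :=
  (p * (2 / 5) + 1 * binEntropy p) / (1 - (9 / 10) * p)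

lemma be_eq (p : ℝ) : binEntropy p = Real.binEntropy p := by
  rw [Real.binEntropy, Real.log_inv, Real.log_inv, binEntropy]; ring

lemma be_cont : Continuous binEntropy := by
  have : binEntropy = Real.binEntropy := funext be_eq
  rw [this]; exact Real.binEntropy_continuous

lemma be_le_log2 (p : ℝ) : binEntropy p ≤ Real.log 2 := by
  rw [be_eq]; exact Real.binEntropy_le_log_two

lemma be_anti {p q : ℝ} (hp : (2:ℝ)⁻¹ ≤ p) (hpq : p ≤ q) (hq : q ≤ 1) :
    binEntropy q ≤ binEntropy p := by
  rw [be_eq, be_eq]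
  exact Real.binEntropy_strictAntiOn.antitoneOn ⟨hp, le_trans hpq hq⟩
    ⟨le_trans hp hpq, hq⟩ hpq

lemma log_lt_of_sum {x u : ℝ} (n : ℕ) (hx : 0 < x) (hu : 0 ≤ u)
    (h : x < ∑ i ∈ Finset.range n, u ^ i / (Nat.factorial i)) : Real.log x < u := by
  rw [Real.log_lt_iff_lt_exp hx]
  exact h.trans_le (Real.sum_le_exp_of_nonneg hu n)

lemma L1 : Real.log (50/41) < 0.205 := by
  apply log_lt_of_sum 3 (by norm_num) (by norm_num)
  simp [Finset.sum_range_succ, Nat.factorial]; norm_num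

lemma L2 : Real.log (50/9) < 1.725 := by
  apply log_lt_of_sum 6 (by norm_num) (by norm_num)
  simp [Finset.sum_range_succ, Nat.factorial]; norm_num

lemma L3 : Real.log (25/22) < 0.13 := by
  apply log_lt_of_sum 3 (by norm_num) (by norm_num)
  simp [Finset.sum_range_succ, Nat.factorial]; norm_num

lemma L4 : Real.log (25/3) < 2.14 := by
  apply log_lt_of_sum 7 (by norm_num) (by norm_num)
  simp [Finset.sum_range_succ, Nat.factorial]; norm_num

lemma L5 : Real.log (50/47) < 0.07 := by
  apply log_lt_of_sum 2 (by norm_num) (by norm_num)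
  simp [Finset.sum_range_succ, Nat.factorial]; norm_num

lemma L6 : Real.log (50/3) < 2.9 := by
  apply log_lt_of_sum 6 (by norm_num) (by norm_num)
  simp [Finset.sum_range_succ, Nat.factorial]; norm_num

lemma H1 : binEntropy (41/50) ≤ 0.4786 := by
  have h1 := L1; have h2 := L2
  rw [binEntropy]
  have e1 : Real.log ((41:ℝ)/50) = -Real.log (50/41) := by
    rw [← Real.log_inv]; norm_num
  have e2 : Real.log (1 - (41:ℝ)/50) = -Real.log (50/9) := by
    rw [← Real.log_inv]; norm_num
  rw [e1, e2]; nlinarith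

lemma H2 : binEntropy (22/25) ≤ 0.3712 := by
  have h1 := L3; have h2 := L4
  rw [binEntropy]
  have e1 : Real.log ((22:ℝ)/25) = -Real.log (25/22) := by
    rw [← Real.log_inv]; norm_num
  have e2 : Real.log (1 - (22:ℝ)/25) = -Real.log (25/3) := by
    rw [← Real.log_inv]; norm_num
  rw [e1, e2]; nlinarith

lemma H3 : binEntropy (47/50) ≤ 0.2398 := by
  have h1 := L5; have h2 := L6
  rw [binEntropy]
  have e1 : Real.log ((47:ℝ)/50) = -Real.log (50/47) := by
    rw [← Real.log_inv]; norm_num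
  have e2 : Real.log (1 - (47:ℝ)/50) = -Real.log (50/3) := by
    rw [← Real.log_inv]; norm_num
  rw [e1, e2]; nlinarith

lemma be_half : binEntropy (1/2) = Real.log 2 := by
  rw [binEntropy]
  have : Real.log ((1:ℝ)/2) = -Real.log 2 := by
    rw [← Real.log_inv]; norm_num
  rw [show (1:ℝ) - 1/2 = 1/2 by norm_num, this]; ring

lemma fAS_half : fAS (1/2) = 4/11 := by
  rw [fAS, be_half]; norm_num

lemma fAS_zero : fAS 0 = -Real.log 2 := by
  rw [fAS, binEntropy]; norm_num

lemma fAS_one : fAS 1 = 4 - 10 * Real.log 2 := by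
  rw [fAS, binEntropy]; norm_num; ring

lemma gASN_zero : gASN 0 = 0 := by
  rw [gASN, binEntropy]; norm_num

lemma gASN_one : gASN 1 = 4 := by
  rw [gASN, binEntropy]; norm_num

lemma be_witness : (0.09 : ℝ) * Real.log 2 ≤ binEntropy (197/200) := by
  rw [binEntropy]
  have h1 : Real.log ((197:ℝ)/200) ≤ 0 := by
    apply Real.log_nonpos <;> norm_num
  have h2 : Real.log (1 - (197:ℝ)/200) = -Real.log (200/3) := by
    rw [← Real.log_inv]; norm_num
  have h3 : (6:ℝ) * Real.log 2 ≤ Real.log (200/3) := by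
    have : Real.log ((2:ℝ)^6) ≤ Real.log (200/3) :=
      Real.log_le_log (by norm_num) (by norm_num)
    rwa [Real.log_pow] at this
  have hl2 : (0:ℝ) < Real.log 2 := Real.log_pos (by norm_num)
  rw [h2]; nlinarith

lemma gASN_witness : (4.02 : ℝ) ≤ gASN (197/200) := by
  have h := be_witness
  have hl2 : (0.6931471 : ℝ) < Real.log 2 := by
    have := Real.log_two_gt_d9; linarith
  rw [gASN, le_div_iff₀ (by norm_num : (0:ℝ) < 1 - (9/10) * (197/200))]
  nlinarith

lemma cont_fAS : ContinuousOn fAS (Set.Icc 0 1) := by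
  apply ContinuousOn.div
  · exact (((continuous_id.mul continuous_const).add
      (continuous_const.mul be_cont)).sub continuous_const).continuousOn
  · exact (continuous_const.sub (continuous_const.mul continuous_id)).continuousOn
  · intro x hx
    simp only [Set.mem_Icc] at hx
    nlinarith [hx.1, hx.2]

lemma cont_gASN : ContinuousOn gASN (Set.Icc 0 1) := by
  apply ContinuousOn.div
  · exact ((continuous_id.mul continuous_const).add
      (continuous_const.mul be_cont)).continuousOn
  · exact (continuous_const.sub (continuous_const.mul continuous_id)).continuousOn
  · intro x hx
    simp only [Set.mem_Icc] at hx
    nlinarith [hx.1, hx.2]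

/-- **Dropping the living cost changes the optimizer.**
Both `fAS` and `gASN` attain a maximum on `(0,1)`, but no point of `(0,1)` is
simultaneously a maximizer of both. -/
theorem living_cost_changes_optimizer :
    (∃ p₁ ∈ Set.Ioo (0 : ℝ) 1, ∀ p ∈ Set.Ioo (0 : ℝ) 1, fAS p ≤ fAS p₁) ∧
    (∃ p₂ ∈ Set.Ioo (0 : ℝ) 1, ∀ p ∈ Set.Ioo (0 : ℝ) 1, gASN p ≤ gASN p₂) ∧
    ¬ ∃ p ∈ Set.Ioo (0 : ℝ) 1,
        (∀ q ∈ Set.Ioo (0 : ℝ) 1, fAS q ≤ fAS p) ∧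
        (∀ q ∈ Set.Ioo (0 : ℝ) 1, gASN q ≤ gASN p) := by
  have hl2lo : (0.6931471 : ℝ) < Real.log 2 := by
    have := Real.log_two_gt_d9; linarith
  have hl2hi : Real.log 2 < (0.6931472 : ℝ) := by
    have := Real.log_two_lt_d9; linarith
  refine ⟨?_, ?_, ?_⟩
  · -- fAS attains max on (0,1)
    obtain ⟨x, hx, hmax⟩ := isCompact_Icc.exists_isMaxOn (Set.nonempty_Icc.2 (by norm_num))
      cont_fAS
    have hmax' : ∀ p ∈ Set.Icc (0:ℝ) 1, fAS p ≤ fAS x := hmax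
    have hhalf : fAS (1/2) ≤ fAS x := hmax' (1/2) (by norm_num)
    rw [fAS_half] at hhalf
    refine ⟨x, ⟨?_, ?_⟩, fun p hp => hmax' p ⟨hp.1.le, hp.2.le⟩⟩
    · rcases hx.1.lt_or_eq with h | h
      · exact h
      · exfalso; rw [← h, fAS_zero] at hhalf; linarith
    · rcases hx.2.lt_or_eq with h | h
      · exact h
      · exfalso; rw [h, fAS_one] at hhalf; linarith
  · -- gASN attains max on (0,1)
    obtain ⟨x, hx, hmax⟩ := isCompact_Icc.exists_isMaxOn (Set.nonempty_Icc.2 (by norm_num))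
      cont_gASN
    have hmax' : ∀ p ∈ Set.Icc (0:ℝ) 1, gASN p ≤ gASN x := hmax
    have hw : (4.02:ℝ) ≤ gASN x :=
      gASN_witness.trans (hmax' (197/200) (by norm_num))
    refine ⟨x, ⟨?_, ?_⟩, fun p hp => hmax' p ⟨hp.1.le, hp.2.le⟩⟩
    · rcases hx.1.lt_or_eq with h | h
      · exact h
      · exfalso; rw [← h, gASN_zero] at hw; linarith
    · rcases hx.2.lt_or_eq with h | h
      · exact h
      · exfalso; rw [h, gASN_one] at hw; linarith
  · -- no common maximizer
    rintro ⟨p, hp, hf, hg⟩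
    obtain ⟨hp0, hp1⟩ := hp
    have hd : (0:ℝ) < 1 - (9/10) * p := by linarith
    -- constraint (A) from f-maximality at 1/2
    have hA : (4:ℝ)/11 * (1 - (9/10) * p) ≤ p * (2/5) + binEntropy p - Real.log 2 := by
      have h := hf (1/2) (by norm_num)
      rw [fAS_half, fAS, le_div_iff₀ hd] at h
      linarith
    -- constraint (B) from g-maximality at 197/200
    have hB : (4.02:ℝ) * (1 - (9/10) * p) ≤ p * (2/5) + binEntropy p := by
      have h := gASN_witness.trans (hg (197/200) (by norm_num))
      rw [gASN, le_div_iff₀ hd] at h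
      linarith
    rcases le_or_gt p (41/50) with h1 | h1
    · -- region 1 : use h ≤ log 2 in (B)
      have := be_le_log2 p
      nlinarith
    rcases le_or_gt p (22/25) with h2 | h2
    · -- region 2 : use h(p) ≤ h(0.82) in (B)
      have := (be_anti (by norm_num) h1.le hp1.le).trans H1
      nlinarith
    rcases le_or_gt p (47/50) with h3 | h3
    · -- region 3 : use h(p) ≤ h(0.88) in (A)
      have := (be_anti (by norm_num) h2.le hp1.le).trans H2
      nlinarith
    · -- region 4 : use h(p) ≤ h(0.94) in (A)
      have := (be_anti (by norm_num) h3.le hp1.le).trans H3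
      nlinarith
end

section
/- Let S and A be nonempty finite types, N a positive natural number, ρ : PMF S an initial distribution, P : S → A → PMF S a transition kernel, and π, π₀ : S → PMF A two policies with π₀(s)(a) > 0 for all (s,a). On the finite type of length-N trajectories τ = (s_0, a_0, s_1, a_1, …, s_{N−1}, a_{N−1}) define q(τ) = ρ(s_0) · ∏_{t=0}^{N−1} π(s_t)(a_t) · ∏_{t=0}^{N−2} P(s_t, a_t)(s_{t+1}) and p(τ) analogously with π₀ in place of π. Then, with the convention 0·log 0 = 0, ∑_{τ} q(τ) · log( q(τ) / p(τ) ) = ∑_{τ} q(τ) · ∑_{t=0}^{N−1} log( π(s_t)(a_t) / π₀(s_t)(a_t) ). -/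
/-- **Finite-horizon telescoping of the trajectory KL divergence.**
Trajectory distributions `q` (policy `π`) and `p` (policy `π₀`) over length-`N`
trajectories `τ = (s_0, a_0, …, s_{N−1}, a_{N−1})` share the initial
distribution `ρ` and transition kernel `P`; with the convention `0·log 0 = 0`
(via `log 0 = 0`), the trajectory KL divergence reduces to the `q`-expectation
of the summed per-step log policy ratios. -/
theorem trajectory_kl_telescopes
    {S A : Type*} [Fintype S] [Fintype A] [Nonempty S] [Nonempty A]
    (N : ℕ) (hN : 0 < N)
    (ρ : PMF S) (P : S → A → PMF S) (π π₀ : S → PMF A)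
    (hπ₀ : ∀ s a, 0 < (π₀ s) a)
    (q p : (Fin N → S × A) → ℝ)
    (hq : ∀ τ : Fin N → S × A, q τ =
      (ρ (τ ⟨0, hN⟩).1).toReal
        * (∏ t, ((π (τ t).1) (τ t).2).toReal)
        * ∏ t : Fin (N - 1),
            ((P (τ ⟨(t : ℕ), by have := t.2; omega⟩).1
                 (τ ⟨(t : ℕ), by have := t.2; omega⟩).2)
              (τ ⟨(t : ℕ) + 1, by have := t.2; omega⟩).1).toReal)
    (hp : ∀ τ : Fin N → S × A, p τ =
      (ρ (τ ⟨0, hN⟩).1).toReal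
        * (∏ t, ((π₀ (τ t).1) (τ t).2).toReal)
        * ∏ t : Fin (N - 1),
            ((P (τ ⟨(t : ℕ), by have := t.2; omega⟩).1
                 (τ ⟨(t : ℕ), by have := t.2; omega⟩).2)
              (τ ⟨(t : ℕ) + 1, by have := t.2; omega⟩).1).toReal) :
    ∑ τ : Fin N → S × A, q τ * Real.log (q τ / p τ)
      = ∑ τ : Fin N → S × A, q τ *
          ∑ t, Real.log
            (((π (τ t).1) (τ t).2).toReal / ((π₀ (τ t).1) (τ t).2).toReal) := by
  apply Finset.sum_congr rfl
  intro τ _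
  by_cases hqz : q τ = 0
  · simp [hqz]
  · congr 1
    set R := (ρ (τ ⟨0, hN⟩).1).toReal with hR
    set C := ∏ t : Fin (N - 1),
            ((P (τ ⟨(t : ℕ), by have := t.2; omega⟩).1
                 (τ ⟨(t : ℕ), by have := t.2; omega⟩).2)
              (τ ⟨(t : ℕ) + 1, by have := t.2; omega⟩).1).toReal with hC
    have hqτ : q τ = R * (∏ t, ((π (τ t).1) (τ t).2).toReal) * C := hq τ
    have hpτ : p τ = R * (∏ t, ((π₀ (τ t).1) (τ t).2).toReal) * C := hp τ
    have hRne : R ≠ 0 := fun h => hqz (by rw [hqτ, h]; ring)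
    have hCne : C ≠ 0 := fun h => hqz (by rw [hqτ, h]; ring)
    have hPine : (∏ t, ((π (τ t).1) (τ t).2).toReal) ≠ 0 :=
      fun h => hqz (by rw [hqτ, h]; ring)
    have hπpos : ∀ t, 0 < ((π (τ t).1) (τ t).2).toReal := by
      intro t
      have := Finset.prod_ne_zero_iff.mp hPine t (Finset.mem_univ t)
      positivity
    have hπ₀pos : ∀ t, 0 < ((π₀ (τ t).1) (τ t).2).toReal := by
      intro t
      have h := hπ₀ (τ t).1 (τ t).2
      have hne : ((π₀ (τ t).1) (τ t).2) ≠ ⊤ := PMF.apply_ne_top _ _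
      exact ENNReal.toReal_pos h.ne' hne
    have hPi0ne : (∏ t, ((π₀ (τ t).1) (τ t).2).toReal) ≠ 0 :=
      Finset.prod_ne_zero_iff.mpr fun t _ => (hπ₀pos t).ne'
    have hratio : q τ / p τ = ∏ t, ((π (τ t).1) (τ t).2).toReal /
        ((π₀ (τ t).1) (τ t).2).toReal := by
      rw [hqτ, hpτ, Finset.prod_div_distrib]
      field_simp
    rw [hratio, Real.log_prod]
    intro t _
    exact (div_pos (hπpos t) (hπ₀pos t)).ne'
end
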